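/- Let 0 ≤ l ≤ e−1 and let C be a linear code of length n over R whose component codes satisfy 0 < dim_{F_q} C_i < n for each i = 1,2,3,4. Then C is an MDS code over R if and only if its l-Galois dual C^{⊥_l} is an MDS code over R. -/

import Mathlib

open scoped BigOperators

/-- The ring `R = F_q + uF_q + vF_q + uvF_q ≅ F_q^4` (componentwise operations). -/
abbrev RR (F : Type*) := Fin 4 → F

/-- The pairwise orthogonal idempotents `γ_1, γ_2, γ_3, γ_4` of `R`,
realized as the standard idempotents of `F_q^4`. -/
def gam (F : Type*) [Field F] (i : Fin 4) : RR F := Pi.single i 1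

/-- The `i`-th component code `C_i ⊆ F_q^n` of a code `C ⊆ R^n`. -/
def compCode {F : Type*} [Field F] {n : ℕ} (C : Set (Fin n → RR F)) (i : Fin 4) :
    Set (Fin n → F) :=
  {x | ∃ c ∈ C, ∀ j, c j i = x j}

/-- Euclidean dual of a code over `R`. -/
def euclDualR {F : Type*} [Field F] {n : ℕ} (C : Set (Fin n → RR F)) :
    Set (Fin n → RR F) :=
  {s | ∀ t ∈ C, ∑ j, t j * s j = 0}

/-- `l`-Galois dual of a code over `R`; apply with `pl = p ^ l`
(the `l`-Galois inner product is `[t,s]_l = ∑ j, t j * (s j) ^ (p ^ l)`,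
since `F^l(r) = r ^ (p ^ l)`). -/
def galDualR {F : Type*} [Field F] {n : ℕ} (pl : ℕ) (C : Set (Fin n → RR F)) :
    Set (Fin n → RR F) :=
  {s | ∀ t ∈ C, ∑ j, t j * s j ^ pl = 0}

/-- `l`-Galois dual of a code over the field `F = F_q`; apply with `pl = p ^ l`. -/
def galDualF {F : Type*} [Field F] {ι : Type*} [Fintype ι] (pl : ℕ) (D : Set (ι → F)) :
    Set (ι → F) :=
  {x | ∀ c ∈ D, ∑ j, c j * x j ^ pl = 0}

/-- Lee weight of a vector over `R`: the sum of the Hamming weights of the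
quadruples of `γ`-components of the coordinates. -/
def leeWt {F : Type*} [Field F] [DecidableEq F] {n : ℕ} (c : Fin n → RR F) : ℕ :=
  ∑ j, hammingNorm (c j)

/-- Minimum Lee distance of a code over `R`. -/
noncomputable def dLee {F : Type*} [Field F] [DecidableEq F] {n : ℕ} (C : Set (Fin n → RR F)) : ℕ :=
  sInf (leeWt '' {c ∈ C | c ≠ 0})

/-- Minimum Hamming distance of a code over `F_q`. -/
noncomputable def dHam {F : Type*} [Field F] [DecidableEq F] {ι : Type*} [Fintype ι]
    (D : Set (ι → F)) : ℕ :=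
  sInf (hammingNorm '' {x ∈ D | x ≠ 0})

/-- The Gray map `ρ : R^n → F_q^{4n}`. -/
def gray {F : Type*} [Field F] {n : ℕ} (c : Fin n → RR F) : Fin n × Fin 4 → F :=
  fun ji => c ji.1 ji.2

/-- The code `C^α = {(α_1 c_1, …, α_n c_n) : c ∈ C}` over `R`. -/
def scaleCode {F : Type*} [Field F] {n : ℕ} (α : Fin n → RR F)
    (C : Set (Fin n → RR F)) : Set (Fin n → RR F) :=
  (fun c => fun j => α j * c j) '' C

/-- The code `C^a = {(a_1 c_1, …, a_n c_n) : c ∈ C}` over `F_q`. -/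
def scaleCodeF {F : Type*} [Field F] {n : ℕ} (a : Fin n → F)
    (D : Set (Fin n → F)) : Set (Fin n → F) :=
  (fun c => fun j => a j * c j) '' D

/-- `P_S`: the submatrix of `P` obtained by deleting the rows and columns
indexed by `S` (its determinant is `1` when `S` is everything, since the
empty matrix has determinant `1`). -/
def minorOff {F : Type*} [Field F] {m : ℕ} (P : Matrix (Fin m) (Fin m) F)
    (S : Finset (Fin m)) : Matrix {i : Fin m // i ∉ S} {i : Fin m // i ∉ S} F :=
  P.submatrix (fun a => (a : Fin m)) (fun a => (a : Fin m))

/-! Since `R ≅ F_q^4`, a linear code `C` over `R` is the product of its four component codes,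
its `l`-Galois dual is the product of the `l`-Galois duals of the components, and the Lee
distance of `C` is the least Hamming distance of a component. Adding up the Singleton bounds
of the components shows that `C` is MDS iff all components are MDS of one common dimension.
The `l`-Galois dual of a component is the Euclidean dual pulled back along a coordinatewise
power of Frobenius, which preserves weights and dimensions, and the Euclidean dual of an MDS
code of dimension `0 < k < n` is MDS of dimension `n - k`; so both conditions pass from `C`
to `C^{⊥_l}` and back. -/

open Module

section Cardinality

variable {F : Type*} [Field F] [Fintype F] {V : Type*} [AddCommGroup V] [Module F V] [Finite V]

theorem natCard_submodule (D : Submodule F V) : Nat.card D = Fintype.card F ^ finrank F D := by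
  have : Fintype D := Fintype.ofFinite D
  rw [Nat.card_eq_fintype_card, Module.card_eq_pow_finrank (K := F) (V := D)]

theorem finrank_eq_of_natCard_eq_pow {D : Submodule F V} {k : ℕ}
    (h : Nat.card D = Fintype.card F ^ k) : finrank F D = k :=
  Nat.pow_right_injective Fintype.one_lt_card ((natCard_submodule D).symm.trans h)

end Cardinality

section FieldCodes

variable {F ι : Type*} [Field F] [Fintype ι]

def euclDual (D : Submodule F (ι → F)) : Submodule F (ι → F) :=
  LinearMap.BilinForm.orthogonal (dotProductBilin F F) D

theorem mem_euclDual {D : Submodule F (ι → F)} {x : ι → F} :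
    x ∈ euclDual D ↔ ∀ c ∈ D, c ⬝ᵥ x = 0 :=
  Iff.rfl

theorem dotProductBilin_nondegenerate :
    (dotProductBilin F F : LinearMap.BilinForm F (ι → F)).Nondegenerate := by
  classical
  constructor <;> intro x hx <;> funext j
  · simpa using hx (Pi.single j 1)
  · simpa using hx (Pi.single j 1)

theorem dotProductBilin_isRefl :
    LinearMap.BilinForm.IsRefl (dotProductBilin F F : LinearMap.BilinForm F (ι → F)) :=
  fun x y h => by simpa [dotProduct_comm] using h

theorem finrank_euclDual (D : Submodule F (ι → F)) :
    finrank F (euclDual D) = Fintype.card ι - finrank F D := by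
  rw [euclDual, LinearMap.BilinForm.finrank_orthogonal dotProductBilin_nondegenerate,
    finrank_fintype_fun_eq_card]

theorem euclDual_euclDual (D : Submodule F (ι → F)) : euclDual (euclDual D) = D :=
  LinearMap.BilinForm.orthogonal_orthogonal dotProductBilin_nondegenerate
    dotProductBilin_isRefl D

theorem finrank_le_card (D : Submodule F (ι → F)) : finrank F D ≤ Fintype.card ι :=
  (Submodule.finrank_le D).trans_eq (finrank_fintype_fun_eq_card F)

theorem exists_ne_zero_forall_eq_zero (D : Submodule F (ι → F)) {s : Finset ι}
    (hs : s.card < finrank F D) : ∃ x ∈ D, x ≠ 0 ∧ ∀ j ∈ s, x j = 0 := by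
  let f := LinearMap.funLeft F F ((↑) : s → ι) ∘ₗ D.subtype
  have hker : LinearMap.ker f ≠ ⊥ := LinearMap.ker_ne_bot_of_finrank_lt <| by
    rwa [finrank_fintype_fun_eq_card, Fintype.card_coe]
  obtain ⟨⟨x, hxD⟩, hx, hx0⟩ := Submodule.exists_mem_ne_zero_of_ne_bot hker
  refine ⟨x, hxD, fun h => hx0 (Subtype.ext h), fun j hj => ?_⟩
  exact congrFun (LinearMap.mem_ker.mp hx) ⟨j, hj⟩

variable [DecidableEq F]

def IsMDS (D : Submodule F (ι → F)) : Prop :=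
  dHam (D : Set (ι → F)) + finrank F D = Fintype.card ι + 1

theorem dHam_le_hammingNorm {S : Set (ι → F)} {x : ι → F} (hx : x ∈ S) (hx0 : x ≠ 0) :
    dHam S ≤ hammingNorm x :=
  Nat.sInf_le ⟨x, ⟨hx, hx0⟩, rfl⟩

theorem exists_hammingNorm_eq_dHam {S : Set (ι → F)} (h : ∃ x ∈ S, x ≠ 0) :
    ∃ x ∈ S, x ≠ 0 ∧ hammingNorm x = dHam S := by
  obtain ⟨x, hx, hx0⟩ := h
  obtain ⟨y, ⟨hy, hy0⟩, hyd⟩ := Nat.sInf_mem (⟨_, x, ⟨hx, hx0⟩, rfl⟩ :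
    (hammingNorm '' {x ∈ S | x ≠ 0}).Nonempty)
  exact ⟨y, hy, hy0, hyd⟩

theorem hammingNorm_le_card_sub {x : ι → F} {s : Finset ι} (hx : ∀ j ∈ s, x j = 0) :
    hammingNorm x ≤ Fintype.card ι - s.card := by
  classical
  rw [← Finset.card_compl]
  exact Finset.card_le_card fun j hj => Finset.mem_compl.mpr fun hjs =>
    (Finset.mem_filter.mp hj).2 (hx j hjs)

theorem dHam_add_finrank_le (D : Submodule F (ι → F)) (hD : 0 < finrank F D) :
    dHam (D : Set (ι → F)) + finrank F D ≤ Fintype.card ι + 1 := by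
  have hle := finrank_le_card D
  obtain ⟨s, -, hs⟩ := Finset.exists_subset_card_eq (s := (Finset.univ : Finset ι))
    (n := finrank F D - 1) (by rw [Finset.card_univ]; omega)
  obtain ⟨x, hxD, hx0, hxs⟩ := exists_ne_zero_forall_eq_zero D (s := s) (by omega)
  have := (dHam_le_hammingNorm hxD hx0).trans (hammingNorm_le_card_sub hxs)
  omega

theorem IsMDS.exists_mem_eq_one_of_card_eq {D : Submodule F (ι → F)} (hD : IsMDS D)
    {s : Finset ι} (hs : s.card = finrank F D) {j₀ : ι} (hj₀ : j₀ ∈ s) :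
    ∃ c ∈ D, c j₀ = 1 ∧ ∀ j ∈ s, j ≠ j₀ → c j = 0 := by
  classical
  have hle := finrank_le_card D
  -- A nonzero codeword vanishing on `s` would have weight `≤ n - k < d`, so restricting
  -- `D` to the `k` coordinates in `s` is injective, hence bijective.
  let f := LinearMap.funLeft F F ((↑) : s → ι) ∘ₗ D.subtype
  have hinj : Function.Injective f := by
    refine (injective_iff_map_eq_zero f).mpr fun ⟨c, hcD⟩ hc => Subtype.ext ?_
    by_contra hc0
    have hwt := (dHam_le_hammingNorm hcD hc0).trans
      (hammingNorm_le_card_sub (s := s) fun j hj => congrFun hc ⟨j, hj⟩)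
    unfold IsMDS at hD
    omega
  have hsurj : Function.Surjective f := (LinearMap.injective_iff_surjective_of_finrank_eq_finrank
    (by rw [finrank_fintype_fun_eq_card, Fintype.card_coe, hs])).mp hinj
  obtain ⟨⟨c, hcD⟩, hc⟩ := hsurj (Pi.single ⟨j₀, hj₀⟩ 1)
  have hcj : ∀ j (hj : j ∈ s),
      c j = (Pi.single (⟨j₀, hj₀⟩ : s) (1 : F) : s → F) ⟨j, hj⟩ :=
    fun j hj => congrFun hc ⟨j, hj⟩
  refine ⟨c, hcD, by simp [hcj j₀ hj₀], fun j hj hne => ?_⟩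
  rw [hcj j hj, Pi.single_eq_of_ne (fun h => hne (congrArg Subtype.val h))]

theorem IsMDS.finrank_lt_hammingNorm {D : Submodule F (ι → F)} (hD : IsMDS D) {x : ι → F}
    (hx : x ∈ euclDual D) (hx0 : x ≠ 0) : finrank F D < hammingNorm x := by
  -- Enlarge the support of `x` to `k` coordinates; the codeword that is `1` at one support
  -- point and `0` on the other `k - 1` coordinates is not orthogonal to `x`.
  by_contra! hwt
  have hle : finrank F D ≤ (Finset.univ : Finset ι).card := finrank_le_card D
  obtain ⟨s, hsupp, -, hs⟩ := Finset.exists_subsuperset_card_eq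
    (Finset.subset_univ {j | x j ≠ 0}) hwt hle
  obtain ⟨j₀, hj₀⟩ := Function.ne_iff.mp hx0
  have hj₀s : j₀ ∈ s := hsupp (Finset.mem_filter.mpr ⟨Finset.mem_univ _, hj₀⟩)
  obtain ⟨c, hcD, hc₀, hc⟩ := hD.exists_mem_eq_one_of_card_eq hs hj₀s
  have hdot : c ⬝ᵥ x = x j₀ := by
    rw [dotProduct, Finset.sum_eq_single j₀ (fun j _ hne => ?_) (by simp), hc₀, one_mul]
    by_cases hjs : j ∈ s
    · rw [hc j hjs hne, zero_mul]
    · rw [of_not_not fun h => hjs (hsupp (Finset.mem_filter.mpr ⟨Finset.mem_univ _, h⟩)),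
        mul_zero]
  exact hj₀ (hdot ▸ mem_euclDual.mp hx c hcD)

theorem IsMDS.euclDual {D : Submodule F (ι → F)} (hD : IsMDS D)
    (hlt : finrank F D < Fintype.card ι) : IsMDS (_root_.euclDual D) := by
  have hpos : 0 < finrank F (_root_.euclDual D) := by rw [finrank_euclDual]; omega
  obtain ⟨x, hx, hx0, hxd⟩ := exists_hammingNorm_eq_dHam
    (Submodule.exists_mem_ne_zero_of_ne_bot (Submodule.one_le_finrank_iff.mp hpos))
  have hlow := hD.finrank_lt_hammingNorm hx hx0
  have hup := dHam_add_finrank_le _ hpos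
  rw [finrank_euclDual] at hup
  unfold IsMDS
  rw [finrank_euclDual]
  omega

theorem isMDS_euclDual_iff {D : Submodule F (ι → F)} (hpos : 0 < finrank F D)
    (hlt : finrank F D < Fintype.card ι) : IsMDS (euclDual D) ↔ IsMDS D := by
  refine ⟨fun h => ?_, fun h => h.euclDual hlt⟩
  simpa [euclDual_euclDual] using h.euclDual (by rw [finrank_euclDual]; omega)

end FieldCodes

section GaloisTwist

variable {F ι : Type*} [Field F]

def piSemilinear (σ : F ≃+* F) : (ι → F) →ₛₗ[(σ : F →+* F)] (ι → F) where
  toFun x j := σ (x j)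
  map_add' x y := funext fun j => map_add σ (x j) (y j)
  map_smul' a x := funext fun j => map_mul σ a (x j)

theorem piSemilinear_bijective (σ : F ≃+* F) : Function.Bijective (piSemilinear (ι := ι) σ) :=
  (Equiv.piCongrRight fun _ : ι => σ.toEquiv).bijective

variable [Fintype ι]

theorem finrank_comap_piSemilinear [Fintype F] (σ : F ≃+* F) (E : Submodule F (ι → F)) :
    finrank F (E.comap (piSemilinear σ)) = finrank F E := by
  refine finrank_eq_of_natCard_eq_pow ?_
  rw [← natCard_submodule E]
  exact Nat.card_preimage_of_injective (piSemilinear_bijective σ).1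
    fun x _ => (piSemilinear_bijective σ).2 x

def galDual (σ : F ≃+* F) (D : Submodule F (ι → F)) : Submodule F (ι → F) :=
  (euclDual D).comap (piSemilinear σ)

theorem coe_galDual {pl : ℕ} {σ : F ≃+* F} (hσ : ∀ a, σ a = a ^ pl)
    (D : Submodule F (ι → F)) :
    (galDual σ D : Set (ι → F)) = galDualF pl (D : Set (ι → F)) := by
  ext x
  simp [galDual, galDualF, mem_euclDual, piSemilinear, dotProduct, hσ]

theorem finrank_galDual [Fintype F] (σ : F ≃+* F) (D : Submodule F (ι → F)) :
    finrank F (galDual σ D) = Fintype.card ι - finrank F D := by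
  rw [galDual, finrank_comap_piSemilinear, finrank_euclDual]

variable [DecidableEq F]

theorem dHam_preimage {f : (ι → F) → ι → F} (hf : Function.Surjective f)
    (hw : ∀ x, hammingNorm (f x) = hammingNorm x) (S : Set (ι → F)) :
    dHam (f ⁻¹' S) = dHam S := by
  have hf0 : ∀ x, f x = 0 ↔ x = 0 := fun x => by
    rw [← hammingNorm_eq_zero, hw, hammingNorm_eq_zero]
  unfold dHam
  congr 1
  ext m
  constructor
  · rintro ⟨x, ⟨hx, hx0⟩, rfl⟩
    exact ⟨f x, ⟨hx, (hf0 x).not.mpr hx0⟩, hw x⟩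
  · rintro ⟨y, ⟨hy, hy0⟩, rfl⟩
    obtain ⟨x, rfl⟩ := hf y
    exact ⟨x, ⟨hy, (hf0 x).not.mp hy0⟩, (hw x).symm⟩

theorem isMDS_comap_piSemilinear_iff [Fintype F] (σ : F ≃+* F) (E : Submodule F (ι → F)) :
    IsMDS (E.comap (piSemilinear σ)) ↔ IsMDS E := by
  unfold IsMDS
  rw [finrank_comap_piSemilinear, Submodule.comap_coe,
    dHam_preimage (piSemilinear_bijective σ).2 fun x =>
      hammingNorm_comp (fun _ => σ) (fun _ => σ.injective) fun _ => map_zero σ]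

theorem isMDS_galDual_iff [Fintype F] (σ : F ≃+* F) {D : Submodule F (ι → F)}
    (hpos : 0 < finrank F D) (hlt : finrank F D < Fintype.card ι) :
    IsMDS (galDual σ D) ↔ IsMDS D :=
  (isMDS_comap_piSemilinear_iff σ _).trans (isMDS_euclDual_iff hpos hlt)

end GaloisTwist

theorem card_mul_add_sum_eq_card_mul_iff {ι : Type*} [Fintype ι] {d k : ι → ℕ} {D m : ℕ}
    (hsing : ∀ i, d i + k i ≤ m) (hle : ∀ i, D ≤ d i) (hex : ∃ i, d i ≤ D) :
    Fintype.card ι * D + ∑ i, k i = Fintype.card ι * m ↔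
      (∀ i, d i + k i = m) ∧ ∀ i j, k i = k j := by
  -- `D` is the least `d i`, and `|ι| D + ∑ k ≤ ∑ (d + k) ≤ |ι| m`.
  obtain ⟨i₀, hi₀⟩ := hex
  have hlhs : Fintype.card ι * D + ∑ i, k i = ∑ i, (D + k i) := by
    simp [Finset.sum_add_distrib]
  have hrhs : Fintype.card ι * m = ∑ _i : ι, m := by simp
  rw [hlhs, hrhs]
  constructor
  · intro h
    have hDk : ∀ i, D + k i = m := fun i =>
      (Finset.sum_eq_sum_iff_of_le fun i _ => (Nat.add_le_add_right (hle i) _).trans (hsing i)).mp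
        h i (Finset.mem_univ i)
    refine ⟨fun i => ?_, fun i j => ?_⟩
    · have := hDk i; have := hsing i; have := hle i; omega
    · have := hDk i; have := hDk j; omega
  · rintro ⟨hmds, hk⟩
    refine Finset.sum_congr rfl fun i _ => ?_
    have := hmds i₀; have := hk i i₀; have := hle i₀; omega

section ComponentProducts

variable {F : Type*} {n : ℕ}

/-- `S = γ_1 T_1 ⊕ γ_2 T_2 ⊕ γ_3 T_3 ⊕ γ_4 T_4`. -/
def IsComponentProduct (S : Set (Fin n → RR F)) (T : Fin 4 → Set (Fin n → F)) : Prop :=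
  ∀ s, s ∈ S ↔ ∀ i, (fun j => s j i) ∈ T i

theorem IsComponentProduct.natCard_eq {S : Set (Fin n → RR F)} {T : Fin 4 → Set (Fin n → F)}
    (h : IsComponentProduct S T) : Nat.card S = ∏ i, Nat.card (T i) := by
  let e : S ≃ ∀ i, T i :=
    { toFun := fun s i => ⟨fun j => s.1 j i, (h s.1).mp s.2 i⟩
      invFun := fun x => ⟨fun j i => (x i).1 j, (h _).mpr fun i => (x i).2⟩
      left_inv := fun _ => rfl
      right_inv := fun _ => rfl }
  rw [Nat.card_congr e, Nat.card_pi]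

end ComponentProducts

section ComponentCodes

variable {F : Type*} [Field F] {n : ℕ}

def compSub (C : Submodule (RR F) (Fin n → RR F)) (i : Fin 4) : Submodule F (Fin n → F) where
  carrier := compCode (C : Set (Fin n → RR F)) i
  add_mem' := by
    rintro x y ⟨c, hc, hcx⟩ ⟨d, hd, hdy⟩
    exact ⟨c + d, C.add_mem hc hd, fun j => by simp [hcx, hdy]⟩
  zero_mem' := ⟨0, C.zero_mem, fun _ => rfl⟩
  smul_mem' a x := by
    rintro ⟨c, hc, hcx⟩
    exact ⟨(fun _ => a : RR F) • c, C.smul_mem _ hc, fun j => by simp [hcx]⟩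

theorem isComponentProduct_compSub (C : Submodule (RR F) (Fin n → RR F)) :
    IsComponentProduct (C : Set (Fin n → RR F)) fun i => (compSub C i : Set (Fin n → F)) := by
  intro s
  refine ⟨fun hs i => ⟨s, hs, fun _ => rfl⟩, fun h => ?_⟩
  choose t ht hts using h
  have hs : s = ∑ i, gam F i • t i := by
    funext j i'
    simp [Finset.sum_apply, gam, Pi.single_apply, hts]
  rw [hs]
  exact C.sum_mem fun i _ => C.smul_mem _ (ht i)

/-- The word `γ_i x ∈ R^n`. -/
def embedComp (i : Fin 4) (x : Fin n → F) : Fin n → RR F := fun j => Pi.single i (x j)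

theorem embedComp_apply_self (i : Fin 4) (x : Fin n → F) : (fun j => embedComp i x j i) = x :=
  funext fun j => Pi.single_eq_same (M := fun _ => F) i (x j)

theorem embedComp_apply_of_ne {i i' : Fin 4} (hne : i' ≠ i) (x : Fin n → F) :
    (fun j => embedComp i x j i') = 0 :=
  funext fun j => Pi.single_eq_of_ne (M := fun _ => F) hne (x j)

theorem embedComp_ne_zero {i : Fin 4} {x : Fin n → F} (hx : x ≠ 0) : embedComp i x ≠ 0 :=
  fun h => hx (by rw [← embedComp_apply_self i x, h]; rfl)

theorem leeWt_eq_sum [DecidableEq F] (c : Fin n → RR F) :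
    leeWt c = ∑ i, hammingNorm fun j => c j i := by
  simp only [leeWt, hammingNorm, Finset.card_filter]
  exact Finset.sum_comm

theorem leeWt_embedComp [DecidableEq F] (i : Fin 4) (x : Fin n → F) :
    leeWt (embedComp i x) = hammingNorm x := by
  rw [leeWt_eq_sum, Finset.sum_eq_single i
    (fun i' _ hne => by rw [embedComp_apply_of_ne hne, hammingNorm_zero]) (by simp),
    embedComp_apply_self]

namespace IsComponentProduct

variable {S : Set (Fin n → RR F)} {T : Fin 4 → Set (Fin n → F)}

theorem embedComp_mem (h : IsComponentProduct S T) (h0 : ∀ i, (0 : Fin n → F) ∈ T i)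
    {i : Fin 4} {x : Fin n → F} (hx : x ∈ T i) : embedComp i x ∈ S := by
  refine (h _).mpr fun i' => ?_
  rcases eq_or_ne i' i with rfl | hne
  · rwa [embedComp_apply_self]
  · rw [embedComp_apply_of_ne hne]
    exact h0 i'

theorem galDualR (h : IsComponentProduct S T) (h0 : ∀ i, (0 : Fin n → F) ∈ T i) (pl : ℕ) :
    IsComponentProduct (_root_.galDualR pl S) fun i => galDualF pl (T i) := by
  have hcomp : ∀ (t s : Fin n → RR F) i,
      (∑ j, t j * s j ^ pl) i = ∑ j, t j i * s j i ^ pl :=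
    fun t s i => by simp [Finset.sum_apply]
  refine fun s => ⟨fun hs i x hx => ?_, fun hs t ht => funext fun i => ?_⟩
  · simpa [hcomp, embedComp] using congrFun (hs _ (h.embedComp_mem h0 hx)) i
  · rw [hcomp]
    exact hs i _ ((h t).mp ht i)

theorem natCard_eq_pow [Fintype F] {D : Fin 4 → Submodule F (Fin n → F)}
    (h : IsComponentProduct S fun i => D i) :
    Nat.card S = Fintype.card F ^ ∑ i, finrank F (D i) := by
  rw [h.natCard_eq, ← Finset.prod_pow_eq_pow_sum]
  exact Finset.prod_congr rfl fun i _ => natCard_submodule (D i)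

variable [DecidableEq F]

theorem dLee_le (h : IsComponentProduct S T) (h0 : ∀ i, (0 : Fin n → F) ∈ T i) {i : Fin 4}
    {x : Fin n → F} (hx : x ∈ T i) (hx0 : x ≠ 0) : dLee S ≤ hammingNorm x :=
  leeWt_embedComp i x ▸
    Nat.sInf_le ⟨_, ⟨h.embedComp_mem h0 hx, embedComp_ne_zero hx0⟩, rfl⟩

theorem exists_hammingNorm_le_dLee (h : IsComponentProduct S T)
    (h0 : ∀ i, (0 : Fin n → F) ∈ T i) {i : Fin 4} {x : Fin n → F} (hx : x ∈ T i)
    (hx0 : x ≠ 0) : ∃ i', ∃ y ∈ T i', y ≠ 0 ∧ hammingNorm y ≤ dLee S := by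
  obtain ⟨c, ⟨hc, hc0⟩, hcd⟩ := Nat.sInf_mem (⟨_, _, ⟨h.embedComp_mem h0 hx,
    embedComp_ne_zero hx0⟩, rfl⟩ : (leeWt '' {c ∈ S | c ≠ 0}).Nonempty)
  obtain ⟨i', hi'⟩ : ∃ i', (fun j => c j i') ≠ 0 := by
    by_contra! hall
    exact hc0 (funext fun j => funext fun i' => congrFun (hall i') j)
  refine ⟨i', _, (h c).mp hc i', hi', ?_⟩
  rw [dLee, ← hcd, leeWt_eq_sum]
  exact Finset.single_le_sum (f := fun i => hammingNorm fun j => c j i)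
    (fun _ _ => Nat.zero_le _) (Finset.mem_univ i')

theorem four_mul_dLee_add_sum_eq_iff {D : Fin 4 → Submodule F (Fin n → F)}
    (h : IsComponentProduct S fun i => D i) (hD : ∀ i, 0 < finrank F (D i)) :
    4 * dLee S + ∑ i, finrank F (D i) = 4 * n + 4 ↔
      (∀ i, IsMDS (D i)) ∧ ∀ i j, finrank F (D i) = finrank F (D j) := by
  have h0 : ∀ i, (0 : Fin n → F) ∈ (D i : Set (Fin n → F)) := fun i => (D i).zero_mem
  have hne : ∀ i, ∃ x ∈ (D i : Set (Fin n → F)), x ≠ 0 := fun i =>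
    Submodule.exists_mem_ne_zero_of_ne_bot (Submodule.one_le_finrank_iff.mp (hD i))
  have hle : ∀ i, dLee S ≤ dHam (D i : Set (Fin n → F)) := fun i => by
    obtain ⟨x, hx, hx0, hxd⟩ := exists_hammingNorm_eq_dHam (hne i)
    exact hxd ▸ h.dLee_le h0 hx hx0
  have hex : ∃ i, dHam (D i : Set (Fin n → F)) ≤ dLee S := by
    obtain ⟨x, hx, hx0⟩ := hne 0
    obtain ⟨i, y, hy, hy0, hyd⟩ := h.exists_hammingNorm_le_dLee h0 hx hx0
    exact ⟨i, (dHam_le_hammingNorm hy hy0).trans hyd⟩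
  simpa [IsMDS, mul_add] using
    card_mul_add_sum_eq_card_mul_iff (fun i => dHam_add_finrank_le (D i) (hD i)) hle hex

end IsComponentProduct

theorem isComponentProduct_galDual (C : Submodule (RR F) (Fin n → RR F)) {pl : ℕ}
    {σ : F ≃+* F} (hσ : ∀ a, σ a = a ^ pl) :
    IsComponentProduct (galDualR pl (C : Set (Fin n → RR F)))
      fun i => (galDual σ (compSub C i) : Set (Fin n → F)) := by
  simpa only [coe_galDual hσ] using
    (isComponentProduct_compSub C).galDualR (fun i => (compSub C i).zero_mem) pl

end ComponentCodes

theorem statement19_general {p e l n : ℕ} (hp : p.Prime)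
    (F : Type*) [Field F] [Fintype F] [DecidableEq F] (hcard : Fintype.card F = p ^ e)
    (C : Submodule (RR F) (Fin n → RR F))
    (k : Fin 4 → ℕ)
    (hk : ∀ i, Nat.card (compCode (C : Set (Fin n → RR F)) i) = Fintype.card F ^ k i)
    (hk0 : ∀ i, 0 < k i) (hkn : ∀ i, k i < n)
    (K : ℕ) (hK : Nat.card C = Fintype.card F ^ K)
    (K' : ℕ)
    (hK' : Nat.card (galDualR (p ^ l) (C : Set (Fin n → RR F))) = Fintype.card F ^ K') :
    4 * dLee (C : Set (Fin n → RR F)) + K = 4 * n + 4 ↔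
      4 * dLee (galDualR (p ^ l) (C : Set (Fin n → RR F))) + K' = 4 * n + 4 := by
  have : Fact p.Prime := ⟨hp⟩
  have : CharP F p := charP_of_card_eq_prime_pow hcard
  set σ := iterateFrobeniusEquiv F p l
  have hσ : ∀ a, σ a = a ^ p ^ l := iterateFrobeniusEquiv_def F p l
  set D := compSub C
  have hD : ∀ i, finrank F (D i) = k i := fun i => finrank_eq_of_natCard_eq_pow (hk i)
  have hDσ : ∀ i, finrank F (galDual σ (D i)) = n - k i := fun i => by
    rw [finrank_galDual, hD, Fintype.card_fin]
  have hprod : IsComponentProduct (C : Set (Fin n → RR F)) fun i => (D i : Set (Fin n → F)) :=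
    isComponentProduct_compSub C
  have hdual : IsComponentProduct (galDualR (p ^ l) (C : Set (Fin n → RR F)))
      fun i => (galDual σ (D i) : Set (Fin n → F)) :=
    isComponentProduct_galDual C hσ
  have hKsum : K = ∑ i, finrank F (D i) :=
    Nat.pow_right_injective Fintype.one_lt_card (hK.symm.trans hprod.natCard_eq_pow)
  have hK'sum : K' = ∑ i, finrank F (galDual σ (D i)) :=
    Nat.pow_right_injective Fintype.one_lt_card (hK'.symm.trans hdual.natCard_eq_pow)
  have hmds : ∀ i, IsMDS (galDual σ (D i)) ↔ IsMDS (D i) := fun i =>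
    isMDS_galDual_iff σ (by rw [hD]; exact hk0 i) (by rw [hD, Fintype.card_fin]; exact hkn i)
  rw [hKsum, hK'sum, hprod.four_mul_dLee_add_sum_eq_iff fun i => by rw [hD]; exact hk0 i,
    hdual.four_mul_dLee_add_sum_eq_iff fun i => by rw [hDσ]; exact Nat.sub_pos_of_lt (hkn i)]
  simp only [hmds, hD, hDσ]
  refine and_congr_right' (forall₂_congr fun i j => ?_)
  have := hkn i; have := hkn j
  omega

/-- `C` (with `|C| = q^K`, `|C_i| = q^{k_i}`, `0 < k_i < n`,
`|C^{⊥_l}| = q^{K'}`) is MDS over `R` iff its `l`-Galois dual `C^{⊥_l}` is MDS over `R`. -/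
theorem statement19 {p e l n : ℕ} (hp : p.Prime) (he : 0 < e) (hl : l < e)
    (F : Type*) [Field F] [Fintype F] [DecidableEq F] (hcard : Fintype.card F = p ^ e)
    (C : Submodule (RR F) (Fin n → RR F))
    (k : Fin 4 → ℕ)
    (hk : ∀ i, Nat.card (compCode (C : Set (Fin n → RR F)) i) = Fintype.card F ^ k i)
    (hk0 : ∀ i, 0 < k i) (hkn : ∀ i, k i < n)
    (K : ℕ) (hK : Nat.card C = Fintype.card F ^ K)
    (K' : ℕ)
    (hK' : Nat.card (galDualR (p ^ l) (C : Set (Fin n → RR F))) = Fintype.card F ^ K') :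
    4 * dLee (C : Set (Fin n → RR F)) + K = 4 * n + 4 ↔
      4 * dLee (galDualR (p ^ l) (C : Set (Fin n → RR F))) + K' = 4 * n + 4 :=
  statement19_general hp F hcard C k hk hk0 hkn K hK K' hK'
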